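/- Let R be a commutative ring and A = (a_{ij}) a symmetric 4×4 matrix over R. For I ⊆ [4] let μ_I = det(A_I) be the principal minor of A with rows and columns indexed by I (with μ_∅ = 1), and let k_I = ∑_{π ∈ Π(I)} (−1)^{|π|−1}(|π|−1)! ∏_{B ∈ π} μ_B be the corresponding cumulants. Then: k_{{i}} = a_{ii} for each i; k_{{i,j}} = −a_{ij}² for each pair i < j; k_{{i,j,l}} = 2·a_{ij}a_{il}a_{jl} for each triple i < j < l; and k_{{1,2,3,4}} = −2·(a_{12}a_{13}a_{24}a_{34} + a_{12}a_{14}a_{23}a_{34} + a_{13}a_{14}a_{23}a_{24}). -/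
import Mathlib

set_option maxRecDepth 40000
set_option maxHeartbeats 4000000

open Finset

/-- The cumulants of a table `μ` indexed by subsets of `[4]`, with values in a
commutative ring. -/
noncomputable def cumulant {R : Type*} [CommRing R] (μ : Finset (Fin 4) → R)
    (I : Finset (Fin 4)) : R :=
  ∑ π : Finpartition I,
    (-1 : R) ^ (π.parts.card - 1) * (Nat.factorial (π.parts.card - 1) : R) *
      ∏ B ∈ π.parts, μ B

/-- The principal minor `μ_I = det(A_I)` of a `4×4` matrix, with rows and columns
indexed by `I` (so `μ_∅ = 1`). -/
noncomputable def principalMinor {R : Type*} [CommRing R]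
    (A : Matrix (Fin 4) (Fin 4) R) (I : Finset (Fin 4)) : R :=
  (A.submatrix (fun i : {x // x ∈ I} => (i : Fin 4))
      (fun j : {x // x ∈ I} => (j : Fin 4))).det

/-- The set of partitions of `I`, encoded as finsets of blocks. -/
def partsFinset (I : Finset (Fin 4)) : Finset (Finset (Finset (Fin 4))) :=
  (I.powerset.erase ∅).powerset.filter
    (fun P => P.sup id = I ∧ ∀ B ∈ P, ∀ C ∈ P, B ≠ C → B ∩ C = ∅)

lemma supIndep_of_inter {P : Finset (Finset (Fin 4))}
    (h : ∀ B ∈ P, ∀ C ∈ P, B ≠ C → B ∩ C = ∅) : P.SupIndep id :=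
  Finset.supIndep_iff_pairwiseDisjoint.mpr fun B hB C hC hne =>
    Finset.disjoint_iff_inter_eq_empty.mpr (h B (Finset.mem_coe.mp hB) C (Finset.mem_coe.mp hC) hne)

lemma cumulant_eq_sum {R : Type*} [CommRing R] (μ : Finset (Fin 4) → R) (I : Finset (Fin 4)) :
    cumulant μ I = ∑ P ∈ partsFinset I,
      (-1 : R) ^ (P.card - 1) * (Nat.factorial (P.card - 1) : R) * ∏ B ∈ P, μ B := by
  simp only [cumulant]
  refine Finset.sum_bij' (fun π _ => π.parts)
    (fun P hP => ⟨P, supIndep_of_inter (Finset.mem_filter.mp hP).2.2,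
      (Finset.mem_filter.mp hP).2.1,
      fun hbot => (Finset.mem_erase.mp (Finset.mem_powerset.mp (Finset.mem_filter.mp hP).1 hbot)).1 rfl⟩)
    ?_ ?_ ?_ ?_ ?_
  · intro π _
    refine Finset.mem_filter.mpr ⟨Finset.mem_powerset.mpr ?_, π.sup_parts, ?_⟩
    · intro B hB
      exact Finset.mem_erase.mpr ⟨π.ne_bot hB, Finset.mem_powerset.mpr (π.le hB)⟩
    · intro B hB C hC hne
      exact Finset.disjoint_iff_inter_eq_empty.mp
        (π.disjoint (Finset.mem_coe.mpr hB) (Finset.mem_coe.mpr hC) hne)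
  · intro P hP; exact Finset.mem_univ _
  · intro π _; exact Finpartition.ext rfl
  · intro P hP; rfl
  · intro π _; rfl

lemma principalMinor_eq_det {R : Type*} [CommRing R] (A : Matrix (Fin 4) (Fin 4) R)
    {k : ℕ} (I : Finset (Fin 4)) (f : Fin k → Fin 4) (hf : ∀ t, f t ∈ I)
    (hinj : Function.Injective f) (hcard : I.card = k) :
    principalMinor A I = (A.submatrix f f).det := by
  have hbij : Function.Bijective (fun t => (⟨f t, hf t⟩ : {x // x ∈ I})) := by
    refine (Fintype.bijective_iff_injective_and_card _).mpr ⟨?_, by simp [Fintype.card_coe, hcard]⟩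
    intro a b hab
    exact hinj (congrArg Subtype.val hab)
  rw [principalMinor, ← Matrix.det_submatrix_equiv_self (Equiv.ofBijective _ hbij),
    Matrix.submatrix_submatrix]
  rfl

lemma principalMinor_univ {R : Type*} [CommRing R] (A : Matrix (Fin 4) (Fin 4) R) :
    principalMinor A Finset.univ = A.det := by
  rw [principalMinor]
  exact Matrix.det_submatrix_equiv_self (Equiv.subtypeUnivEquiv (fun x => Finset.mem_univ x)) A

lemma pm0 {R : Type*} [CommRing R] (A : Matrix (Fin 4) (Fin 4) R) :
    principalMinor A {0} = A 0 0 := by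
  rw [principalMinor_eq_det A {0} ![0] (by decide) (by decide) (by decide), Matrix.det_fin_one]
  simp [Matrix.submatrix_apply]

lemma pm1 {R : Type*} [CommRing R] (A : Matrix (Fin 4) (Fin 4) R) :
    principalMinor A {1} = A 1 1 := by
  rw [principalMinor_eq_det A {1} ![1] (by decide) (by decide) (by decide), Matrix.det_fin_one]
  simp [Matrix.submatrix_apply]

lemma pm2 {R : Type*} [CommRing R] (A : Matrix (Fin 4) (Fin 4) R) :
    principalMinor A {2} = A 2 2 := by
  rw [principalMinor_eq_det A {2} ![2] (by decide) (by decide) (by decide), Matrix.det_fin_one]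
  simp [Matrix.submatrix_apply]

lemma pm3 {R : Type*} [CommRing R] (A : Matrix (Fin 4) (Fin 4) R) :
    principalMinor A {3} = A 3 3 := by
  rw [principalMinor_eq_det A {3} ![3] (by decide) (by decide) (by decide), Matrix.det_fin_one]
  simp [Matrix.submatrix_apply]

lemma pm01 {R : Type*} [CommRing R] (A : Matrix (Fin 4) (Fin 4) R) :
    principalMinor A {0,1} = A 0 0 * A 1 1 - A 0 1 * A 1 0 := by
  rw [principalMinor_eq_det A {0,1} ![0,1] (by decide) (by decide) (by decide), Matrix.det_fin_two]
  simp [Matrix.submatrix_apply]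

lemma pm02 {R : Type*} [CommRing R] (A : Matrix (Fin 4) (Fin 4) R) :
    principalMinor A {0,2} = A 0 0 * A 2 2 - A 0 2 * A 2 0 := by
  rw [principalMinor_eq_det A {0,2} ![0,2] (by decide) (by decide) (by decide), Matrix.det_fin_two]
  simp [Matrix.submatrix_apply]

lemma pm03 {R : Type*} [CommRing R] (A : Matrix (Fin 4) (Fin 4) R) :
    principalMinor A {0,3} = A 0 0 * A 3 3 - A 0 3 * A 3 0 := by
  rw [principalMinor_eq_det A {0,3} ![0,3] (by decide) (by decide) (by decide), Matrix.det_fin_two]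
  simp [Matrix.submatrix_apply]

lemma pm12 {R : Type*} [CommRing R] (A : Matrix (Fin 4) (Fin 4) R) :
    principalMinor A {1,2} = A 1 1 * A 2 2 - A 1 2 * A 2 1 := by
  rw [principalMinor_eq_det A {1,2} ![1,2] (by decide) (by decide) (by decide), Matrix.det_fin_two]
  simp [Matrix.submatrix_apply]

lemma pm13 {R : Type*} [CommRing R] (A : Matrix (Fin 4) (Fin 4) R) :
    principalMinor A {1,3} = A 1 1 * A 3 3 - A 1 3 * A 3 1 := by
  rw [principalMinor_eq_det A {1,3} ![1,3] (by decide) (by decide) (by decide), Matrix.det_fin_two]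
  simp [Matrix.submatrix_apply]

lemma pm23 {R : Type*} [CommRing R] (A : Matrix (Fin 4) (Fin 4) R) :
    principalMinor A {2,3} = A 2 2 * A 3 3 - A 2 3 * A 3 2 := by
  rw [principalMinor_eq_det A {2,3} ![2,3] (by decide) (by decide) (by decide), Matrix.det_fin_two]
  simp [Matrix.submatrix_apply]

lemma pm012 {R : Type*} [CommRing R] (A : Matrix (Fin 4) (Fin 4) R) :
    principalMinor A {0,1,2} = A 0 0 * A 1 1 * A 2 2 - A 0 0 * A 1 2 * A 2 1 - A 0 1 * A 1 0 * A 2 2 + A 0 1 * A 1 2 * A 2 0 + A 0 2 * A 1 0 * A 2 1 - A 0 2 * A 1 1 * A 2 0 := by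
  rw [principalMinor_eq_det A {0,1,2} ![0,1,2] (by decide) (by decide) (by decide), Matrix.det_fin_three]
  simp [Matrix.submatrix_apply]

lemma pm013 {R : Type*} [CommRing R] (A : Matrix (Fin 4) (Fin 4) R) :
    principalMinor A {0,1,3} = A 0 0 * A 1 1 * A 3 3 - A 0 0 * A 1 3 * A 3 1 - A 0 1 * A 1 0 * A 3 3 + A 0 1 * A 1 3 * A 3 0 + A 0 3 * A 1 0 * A 3 1 - A 0 3 * A 1 1 * A 3 0 := by
  rw [principalMinor_eq_det A {0,1,3} ![0,1,3] (by decide) (by decide) (by decide), Matrix.det_fin_three]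
  simp [Matrix.submatrix_apply]

lemma pm023 {R : Type*} [CommRing R] (A : Matrix (Fin 4) (Fin 4) R) :
    principalMinor A {0,2,3} = A 0 0 * A 2 2 * A 3 3 - A 0 0 * A 2 3 * A 3 2 - A 0 2 * A 2 0 * A 3 3 + A 0 2 * A 2 3 * A 3 0 + A 0 3 * A 2 0 * A 3 2 - A 0 3 * A 2 2 * A 3 0 := by
  rw [principalMinor_eq_det A {0,2,3} ![0,2,3] (by decide) (by decide) (by decide), Matrix.det_fin_three]
  simp [Matrix.submatrix_apply]

lemma pm123 {R : Type*} [CommRing R] (A : Matrix (Fin 4) (Fin 4) R) :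
    principalMinor A {1,2,3} = A 1 1 * A 2 2 * A 3 3 - A 1 1 * A 2 3 * A 3 2 - A 1 2 * A 2 1 * A 3 3 + A 1 2 * A 2 3 * A 3 1 + A 1 3 * A 2 1 * A 3 2 - A 1 3 * A 2 2 * A 3 1 := by
  rw [principalMinor_eq_det A {1,2,3} ![1,2,3] (by decide) (by decide) (by decide), Matrix.det_fin_three]
  simp [Matrix.submatrix_apply]

lemma pf0 : partsFinset {0} = ({{{0}}} : Finset (Finset (Finset (Fin 4)))) := by
  decide

lemma pf1 : partsFinset {1} = ({{{1}}} : Finset (Finset (Finset (Fin 4)))) := by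
  decide

lemma pf2 : partsFinset {2} = ({{{2}}} : Finset (Finset (Finset (Fin 4)))) := by
  decide

lemma pf3 : partsFinset {3} = ({{{3}}} : Finset (Finset (Finset (Fin 4)))) := by
  decide

lemma pf01 : partsFinset {0,1} = ({{{0,1}}, {{0}, {1}}} : Finset (Finset (Finset (Fin 4)))) := by
  decide

lemma pf02 : partsFinset {0,2} = ({{{0,2}}, {{0}, {2}}} : Finset (Finset (Finset (Fin 4)))) := by
  decide

lemma pf03 : partsFinset {0,3} = ({{{0,3}}, {{0}, {3}}} : Finset (Finset (Finset (Fin 4)))) := by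
  decide

lemma pf12 : partsFinset {1,2} = ({{{1,2}}, {{1}, {2}}} : Finset (Finset (Finset (Fin 4)))) := by
  decide

lemma pf13 : partsFinset {1,3} = ({{{1,3}}, {{1}, {3}}} : Finset (Finset (Finset (Fin 4)))) := by
  decide

lemma pf23 : partsFinset {2,3} = ({{{2,3}}, {{2}, {3}}} : Finset (Finset (Finset (Fin 4)))) := by
  decide

lemma pf012 : partsFinset {0,1,2} = ({{{0,1,2}}, {{0}, {1,2}}, {{0,1}, {2}}, {{0,2}, {1}}, {{0}, {1}, {2}}} : Finset (Finset (Finset (Fin 4)))) := by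
  decide

lemma pf013 : partsFinset {0,1,3} = ({{{0,1,3}}, {{0}, {1,3}}, {{0,1}, {3}}, {{0,3}, {1}}, {{0}, {1}, {3}}} : Finset (Finset (Finset (Fin 4)))) := by
  decide

lemma pf023 : partsFinset {0,2,3} = ({{{0,2,3}}, {{0}, {2,3}}, {{0,2}, {3}}, {{0,3}, {2}}, {{0}, {2}, {3}}} : Finset (Finset (Finset (Fin 4)))) := by
  decide

lemma pf123 : partsFinset {1,2,3} = ({{{1,2,3}}, {{1}, {2,3}}, {{1,2}, {3}}, {{1,3}, {2}}, {{1}, {2}, {3}}} : Finset (Finset (Finset (Fin 4)))) := by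
  decide

lemma keyU1 : (((Finset.univ : Finset (Fin 4)).powerset.erase ∅).powersetCard 1).filter
    (fun P => P.sup id = Finset.univ ∧ ∀ B ∈ P, ∀ C ∈ P, B ≠ C → B ∩ C = ∅) =
    ({{{0,1,2,3}}} : Finset (Finset (Finset (Fin 4)))) := by
  decide

lemma keyU2 : (((Finset.univ : Finset (Fin 4)).powerset.erase ∅).powersetCard 2).filter
    (fun P => P.sup id = Finset.univ ∧ ∀ B ∈ P, ∀ C ∈ P, B ≠ C → B ∩ C = ∅) =
    ({{{0}, {1,2,3}}, {{0,1}, {2,3}}, {{0,2,3}, {1}}, {{0,1,2}, {3}}, {{0,3}, {1,2}}, {{0,2}, {1,3}}, {{0,1,3}, {2}}} : Finset (Finset (Finset (Fin 4)))) := by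
  decide

lemma keyU3 : (((Finset.univ : Finset (Fin 4)).powerset.erase ∅).powersetCard 3).filter
    (fun P => P.sup id = Finset.univ ∧ ∀ B ∈ P, ∀ C ∈ P, B ≠ C → B ∩ C = ∅) =
    ({{{0}, {1}, {2,3}}, {{0}, {1,2}, {3}}, {{0}, {1,3}, {2}}, {{0,1}, {2}, {3}}, {{0,2}, {1}, {3}}, {{0,3}, {1}, {2}}} : Finset (Finset (Finset (Fin 4)))) := by
  decide

lemma keyU4 : (((Finset.univ : Finset (Fin 4)).powerset.erase ∅).powersetCard 4).filter
    (fun P => P.sup id = Finset.univ ∧ ∀ B ∈ P, ∀ C ∈ P, B ≠ C → B ∩ C = ∅) =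
    ({{{0}, {1}, {2}, {3}}} : Finset (Finset (Finset (Fin 4)))) := by
  decide

lemma pfUniv : partsFinset Finset.univ = ({{{0,1,2,3}}, {{0}, {1,2,3}}, {{0,1}, {2,3}}, {{0,2,3}, {1}}, {{0}, {1}, {2,3}}, {{0,1,2}, {3}}, {{0,3}, {1,2}}, {{0}, {1,2}, {3}}, {{0,2}, {1,3}}, {{0,1,3}, {2}}, {{0}, {1,3}, {2}}, {{0,1}, {2}, {3}}, {{0,2}, {1}, {3}}, {{0,3}, {1}, {2}}, {{0}, {1}, {2}, {3}}} : Finset (Finset (Finset (Fin 4)))) := by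
  apply Finset.Subset.antisymm
  · intro P hP
    simp only [partsFinset, Finset.mem_filter, Finset.mem_powerset] at hP
    obtain ⟨hsub, hsup, hdisj⟩ := hP
    have hbot : ∅ ∉ P := fun hb => (Finset.mem_erase.mp (hsub hb)).1 rfl
    have hle : P.card ≤ 4 := by
      have := (⟨P, supIndep_of_inter hdisj, hsup, hbot⟩ :
        Finpartition (Finset.univ : Finset (Fin 4))).card_parts_le_card
      simpa using this
    have hne : P ≠ ∅ := by
      rintro rfl
      exact absurd hsup (by decide)
    have hpos : 1 ≤ P.card := Finset.card_pos.mpr (Finset.nonempty_of_ne_empty hne)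
    have hmem : ∀ k, P.card = k →
        P ∈ (((Finset.univ : Finset (Fin 4)).powerset.erase ∅).powersetCard k) :=
      fun k hk => Finset.mem_powersetCard.mpr ⟨hsub, hk⟩
    have hcases : P.card = 1 ∨ P.card = 2 ∨ P.card = 3 ∨ P.card = 4 := by omega
    rcases hcases with h | h | h | h
    · have hf : P ∈ (((Finset.univ : Finset (Fin 4)).powerset.erase ∅).powersetCard 1).filter
          (fun P => P.sup id = Finset.univ ∧ ∀ B ∈ P, ∀ C ∈ P, B ≠ C → B ∩ C = ∅) :=
        Finset.mem_filter.mpr ⟨hmem 1 h, hsup, hdisj⟩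
      rw [keyU1] at hf
      exact (by decide : ({{{0,1,2,3}}} : Finset (Finset (Finset (Fin 4)))) ⊆
        ({{{0,1,2,3}}, {{0}, {1,2,3}}, {{0,1}, {2,3}}, {{0,2,3}, {1}}, {{0}, {1}, {2,3}}, {{0,1,2}, {3}}, {{0,3}, {1,2}}, {{0}, {1,2}, {3}}, {{0,2}, {1,3}}, {{0,1,3}, {2}}, {{0}, {1,3}, {2}}, {{0,1}, {2}, {3}}, {{0,2}, {1}, {3}}, {{0,3}, {1}, {2}}, {{0}, {1}, {2}, {3}}} : Finset (Finset (Finset (Fin 4))))) hf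
    · have hf : P ∈ (((Finset.univ : Finset (Fin 4)).powerset.erase ∅).powersetCard 2).filter
          (fun P => P.sup id = Finset.univ ∧ ∀ B ∈ P, ∀ C ∈ P, B ≠ C → B ∩ C = ∅) :=
        Finset.mem_filter.mpr ⟨hmem 2 h, hsup, hdisj⟩
      rw [keyU2] at hf
      exact (by decide : ({{{0}, {1,2,3}}, {{0,1}, {2,3}}, {{0,2,3}, {1}}, {{0,1,2}, {3}}, {{0,3}, {1,2}}, {{0,2}, {1,3}}, {{0,1,3}, {2}}} : Finset (Finset (Finset (Fin 4)))) ⊆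
        ({{{0,1,2,3}}, {{0}, {1,2,3}}, {{0,1}, {2,3}}, {{0,2,3}, {1}}, {{0}, {1}, {2,3}}, {{0,1,2}, {3}}, {{0,3}, {1,2}}, {{0}, {1,2}, {3}}, {{0,2}, {1,3}}, {{0,1,3}, {2}}, {{0}, {1,3}, {2}}, {{0,1}, {2}, {3}}, {{0,2}, {1}, {3}}, {{0,3}, {1}, {2}}, {{0}, {1}, {2}, {3}}} : Finset (Finset (Finset (Fin 4))))) hf
    · have hf : P ∈ (((Finset.univ : Finset (Fin 4)).powerset.erase ∅).powersetCard 3).filter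
          (fun P => P.sup id = Finset.univ ∧ ∀ B ∈ P, ∀ C ∈ P, B ≠ C → B ∩ C = ∅) :=
        Finset.mem_filter.mpr ⟨hmem 3 h, hsup, hdisj⟩
      rw [keyU3] at hf
      exact (by decide : ({{{0}, {1}, {2,3}}, {{0}, {1,2}, {3}}, {{0}, {1,3}, {2}}, {{0,1}, {2}, {3}}, {{0,2}, {1}, {3}}, {{0,3}, {1}, {2}}} : Finset (Finset (Finset (Fin 4)))) ⊆
        ({{{0,1,2,3}}, {{0}, {1,2,3}}, {{0,1}, {2,3}}, {{0,2,3}, {1}}, {{0}, {1}, {2,3}}, {{0,1,2}, {3}}, {{0,3}, {1,2}}, {{0}, {1,2}, {3}}, {{0,2}, {1,3}}, {{0,1,3}, {2}}, {{0}, {1,3}, {2}}, {{0,1}, {2}, {3}}, {{0,2}, {1}, {3}}, {{0,3}, {1}, {2}}, {{0}, {1}, {2}, {3}}} : Finset (Finset (Finset (Fin 4))))) hf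
    · have hf : P ∈ (((Finset.univ : Finset (Fin 4)).powerset.erase ∅).powersetCard 4).filter
          (fun P => P.sup id = Finset.univ ∧ ∀ B ∈ P, ∀ C ∈ P, B ≠ C → B ∩ C = ∅) :=
        Finset.mem_filter.mpr ⟨hmem 4 h, hsup, hdisj⟩
      rw [keyU4] at hf
      exact (by decide : ({{{0}, {1}, {2}, {3}}} : Finset (Finset (Finset (Fin 4)))) ⊆
        ({{{0,1,2,3}}, {{0}, {1,2,3}}, {{0,1}, {2,3}}, {{0,2,3}, {1}}, {{0}, {1}, {2,3}}, {{0,1,2}, {3}}, {{0,3}, {1,2}}, {{0}, {1,2}, {3}}, {{0,2}, {1,3}}, {{0,1,3}, {2}}, {{0}, {1,3}, {2}}, {{0,1}, {2}, {3}}, {{0,2}, {1}, {3}}, {{0,3}, {1}, {2}}, {{0}, {1}, {2}, {3}}} : Finset (Finset (Finset (Fin 4))))) hf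
  · intro P hP
    fin_cases hP <;>
      exact Finset.mem_filter.mpr ⟨Finset.mem_powerset.mpr (by decide), by decide, by decide⟩

lemma pm0123 {R : Type*} [CommRing R] (A : Matrix (Fin 4) (Fin 4) R) :
    principalMinor A {0,1,2,3} = (A 0 0 * A 1 1 * A 2 2 * A 3 3 - A 0 0 * A 1 1 * A 2 3 * A 3 2 - A 0 0 * A 1 2 * A 2 1 * A 3 3 + A 0 0 * A 1 2 * A 2 3 * A 3 1 + A 0 0 * A 1 3 * A 2 1 * A 3 2 - A 0 0 * A 1 3 * A 2 2 * A 3 1 - A 0 1 * A 1 0 * A 2 2 * A 3 3 + A 0 1 * A 1 0 * A 2 3 * A 3 2 + A 0 1 * A 1 2 * A 2 0 * A 3 3 - A 0 1 * A 1 2 * A 2 3 * A 3 0 - A 0 1 * A 1 3 * A 2 0 * A 3 2 + A 0 1 * A 1 3 * A 2 2 * A 3 0 + A 0 2 * A 1 0 * A 2 1 * A 3 3 - A 0 2 * A 1 0 * A 2 3 * A 3 1 - A 0 2 * A 1 1 * A 2 0 * A 3 3 + A 0 2 * A 1 1 * A 2 3 * A 3 0 + A 0 2 * A 1 3 * A 2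 0 * A 3 1 - A 0 2 * A 1 3 * A 2 1 * A 3 0 - A 0 3 * A 1 0 * A 2 1 * A 3 2 + A 0 3 * A 1 0 * A 2 2 * A 3 1 + A 0 3 * A 1 1 * A 2 0 * A 3 2 - A 0 3 * A 1 1 * A 2 2 * A 3 0 - A 0 3 * A 1 2 * A 2 0 * A 3 1 + A 0 3 * A 1 2 * A 2 1 * A 3 0) := by
  rw [show ({0,1,2,3} : Finset (Fin 4)) = Finset.univ from by decide, principalMinor_univ]
  rw [show (A.det) = _ from Matrix.det_succ_row_zero A]
  simp only [Fin.sum_univ_succ, Fin.sum_univ_zero, Matrix.det_fin_three, Matrix.submatrix_apply]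
  norm_num [show (((0:Fin 4)):ℕ) = 0 from rfl, show (((1:Fin 4)):ℕ) = 1 from rfl, show (((2:Fin 4)):ℕ) = 2 from rfl, show (((3:Fin 4)):ℕ) = 3 from rfl, show (Fin.succ (0:Fin 3) : Fin 4) = 1 from rfl, show (Fin.succ (1:Fin 3) : Fin 4) = 2 from rfl, show (Fin.succ (2:Fin 3) : Fin 4) = 3 from rfl, show (Fin.succAbove (0:Fin 4) (0:Fin 3) : Fin 4) = 1 from rfl, show (Fin.succAbove (0:Fin 4) (1:Fin 3) : Fin 4) = 2 from rfl, show (Fin.succAbove (0:Fin 4) (2:Fin 3) : Fin 4) = 3 from rfl, show (Fin.succAbove (1:Fin 4) (0:Fin 3) : Fin 4) = 0 from rfl, show (Fin.succAbove (1:Fin 4) (1:Fin 3) : Fin 4) = 2 from rfl, show (Fin.succAbove (1:Fin 4) (2:Fin 3) : Fin 4) = 3 from rfl, show (Fin.succAbove (2:Fin 4) (0:Fin 3) : Fin 4) = 0 from rfl, show (Fin.succAbove (2:Fin 4) (1:Fin 3) : Fin 4) = 1 from rfl, show (Fin.succAbove (2:Fin 4) (2:Fin 3) : Fin 4) = 3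 from rfl, show (Fin.succAbove (3:Fin 4) (0:Fin 3) : Fin 4) = 0 from rfl, show (Fin.succAbove (3:Fin 4) (1:Fin 3) : Fin 4) = 1 from rfl, show (Fin.succAbove (3:Fin 4) (2:Fin 3) : Fin 4) = 2 from rfl]
  ring

lemma cum0 {R : Type*} [CommRing R] (A : Matrix (Fin 4) (Fin 4) R) :
    cumulant (principalMinor A) {0} = A 0 0 := by
  rw [cumulant_eq_sum, pf0, Finset.sum_singleton]
  simp only [Finset.prod_singleton]
  norm_num [Nat.factorial, pm0, pm1, pm2, pm3, pm01, pm02, pm03, pm12, pm13, pm23, pm012, pm013, pm023, pm123, pm0123]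
  try ring

lemma cum1 {R : Type*} [CommRing R] (A : Matrix (Fin 4) (Fin 4) R) :
    cumulant (principalMinor A) {1} = A 1 1 := by
  rw [cumulant_eq_sum, pf1, Finset.sum_singleton]
  simp only [Finset.prod_singleton]
  norm_num [Nat.factorial, pm0, pm1, pm2, pm3, pm01, pm02, pm03, pm12, pm13, pm23, pm012, pm013, pm023, pm123, pm0123]
  try ring

lemma cum2 {R : Type*} [CommRing R] (A : Matrix (Fin 4) (Fin 4) R) :
    cumulant (principalMinor A) {2} = A 2 2 := by
  rw [cumulant_eq_sum, pf2, Finset.sum_singleton]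
  simp only [Finset.prod_singleton]
  norm_num [Nat.factorial, pm0, pm1, pm2, pm3, pm01, pm02, pm03, pm12, pm13, pm23, pm012, pm013, pm023, pm123, pm0123]
  try ring

lemma cum3 {R : Type*} [CommRing R] (A : Matrix (Fin 4) (Fin 4) R) :
    cumulant (principalMinor A) {3} = A 3 3 := by
  rw [cumulant_eq_sum, pf3, Finset.sum_singleton]
  simp only [Finset.prod_singleton]
  norm_num [Nat.factorial, pm0, pm1, pm2, pm3, pm01, pm02, pm03, pm12, pm13, pm23, pm012, pm013, pm023, pm123, pm0123]
  try ring

lemma cum01 {R : Type*} [CommRing R] (A : Matrix (Fin 4) (Fin 4) R) (hA : A.IsSymm) :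
    cumulant (principalMinor A) {0,1} = -(A 0 1) ^ 2 := by
  have h10 : A 1 0 = A 0 1 := hA.apply 0 1
  have h20 : A 2 0 = A 0 2 := hA.apply 0 2
  have h30 : A 3 0 = A 0 3 := hA.apply 0 3
  have h21 : A 2 1 = A 1 2 := hA.apply 1 2
  have h31 : A 3 1 = A 1 3 := hA.apply 1 3
  have h32 : A 3 2 = A 2 3 := hA.apply 2 3
  rw [cumulant_eq_sum, pf01, Finset.sum_insert (by decide), Finset.sum_singleton, Finset.prod_insert (by decide)]
  simp only [Finset.prod_singleton]
  norm_num [Nat.factorial, pm0, pm1, pm2, pm3, pm01, pm02, pm03, pm12, pm13, pm23, pm012, pm013, pm023, pm123, pm0123, h10, h20, h30, h21, h31, h32, show (#({{0}, {1}} : Finset (Finset (Fin 4)))) = 2 from by decide]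
  try ring

lemma cum02 {R : Type*} [CommRing R] (A : Matrix (Fin 4) (Fin 4) R) (hA : A.IsSymm) :
    cumulant (principalMinor A) {0,2} = -(A 0 2) ^ 2 := by
  have h10 : A 1 0 = A 0 1 := hA.apply 0 1
  have h20 : A 2 0 = A 0 2 := hA.apply 0 2
  have h30 : A 3 0 = A 0 3 := hA.apply 0 3
  have h21 : A 2 1 = A 1 2 := hA.apply 1 2
  have h31 : A 3 1 = A 1 3 := hA.apply 1 3
  have h32 : A 3 2 = A 2 3 := hA.apply 2 3
  rw [cumulant_eq_sum, pf02, Finset.sum_insert (by decide), Finset.sum_singleton, Finset.prod_insert (by decide)]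
  simp only [Finset.prod_singleton]
  norm_num [Nat.factorial, pm0, pm1, pm2, pm3, pm01, pm02, pm03, pm12, pm13, pm23, pm012, pm013, pm023, pm123, pm0123, h10, h20, h30, h21, h31, h32, show (#({{0}, {2}} : Finset (Finset (Fin 4)))) = 2 from by decide]
  try ring

lemma cum03 {R : Type*} [CommRing R] (A : Matrix (Fin 4) (Fin 4) R) (hA : A.IsSymm) :
    cumulant (principalMinor A) {0,3} = -(A 0 3) ^ 2 := by
  have h10 : A 1 0 = A 0 1 := hA.apply 0 1
  have h20 : A 2 0 = A 0 2 := hA.apply 0 2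
  have h30 : A 3 0 = A 0 3 := hA.apply 0 3
  have h21 : A 2 1 = A 1 2 := hA.apply 1 2
  have h31 : A 3 1 = A 1 3 := hA.apply 1 3
  have h32 : A 3 2 = A 2 3 := hA.apply 2 3
  rw [cumulant_eq_sum, pf03, Finset.sum_insert (by decide), Finset.sum_singleton, Finset.prod_insert (by decide)]
  simp only [Finset.prod_singleton]
  norm_num [Nat.factorial, pm0, pm1, pm2, pm3, pm01, pm02, pm03, pm12, pm13, pm23, pm012, pm013, pm023, pm123, pm0123, h10, h20, h30, h21, h31, h32, show (#({{0}, {3}} : Finset (Finset (Fin 4)))) = 2 from by decide]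
  try ring

lemma cum12 {R : Type*} [CommRing R] (A : Matrix (Fin 4) (Fin 4) R) (hA : A.IsSymm) :
    cumulant (principalMinor A) {1,2} = -(A 1 2) ^ 2 := by
  have h10 : A 1 0 = A 0 1 := hA.apply 0 1
  have h20 : A 2 0 = A 0 2 := hA.apply 0 2
  have h30 : A 3 0 = A 0 3 := hA.apply 0 3
  have h21 : A 2 1 = A 1 2 := hA.apply 1 2
  have h31 : A 3 1 = A 1 3 := hA.apply 1 3
  have h32 : A 3 2 = A 2 3 := hA.apply 2 3
  rw [cumulant_eq_sum, pf12, Finset.sum_insert (by decide), Finset.sum_singleton, Finset.prod_insert (by decide)]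
  simp only [Finset.prod_singleton]
  norm_num [Nat.factorial, pm0, pm1, pm2, pm3, pm01, pm02, pm03, pm12, pm13, pm23, pm012, pm013, pm023, pm123, pm0123, h10, h20, h30, h21, h31, h32, show (#({{1}, {2}} : Finset (Finset (Fin 4)))) = 2 from by decide]
  try ring

lemma cum13 {R : Type*} [CommRing R] (A : Matrix (Fin 4) (Fin 4) R) (hA : A.IsSymm) :
    cumulant (principalMinor A) {1,3} = -(A 1 3) ^ 2 := by
  have h10 : A 1 0 = A 0 1 := hA.apply 0 1
  have h20 : A 2 0 = A 0 2 := hA.apply 0 2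
  have h30 : A 3 0 = A 0 3 := hA.apply 0 3
  have h21 : A 2 1 = A 1 2 := hA.apply 1 2
  have h31 : A 3 1 = A 1 3 := hA.apply 1 3
  have h32 : A 3 2 = A 2 3 := hA.apply 2 3
  rw [cumulant_eq_sum, pf13, Finset.sum_insert (by decide), Finset.sum_singleton, Finset.prod_insert (by decide)]
  simp only [Finset.prod_singleton]
  norm_num [Nat.factorial, pm0, pm1, pm2, pm3, pm01, pm02, pm03, pm12, pm13, pm23, pm012, pm013, pm023, pm123, pm0123, h10, h20, h30, h21, h31, h32, show (#({{1}, {3}} : Finset (Finset (Fin 4)))) = 2 from by decide]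
  try ring

lemma cum23 {R : Type*} [CommRing R] (A : Matrix (Fin 4) (Fin 4) R) (hA : A.IsSymm) :
    cumulant (principalMinor A) {2,3} = -(A 2 3) ^ 2 := by
  have h10 : A 1 0 = A 0 1 := hA.apply 0 1
  have h20 : A 2 0 = A 0 2 := hA.apply 0 2
  have h30 : A 3 0 = A 0 3 := hA.apply 0 3
  have h21 : A 2 1 = A 1 2 := hA.apply 1 2
  have h31 : A 3 1 = A 1 3 := hA.apply 1 3
  have h32 : A 3 2 = A 2 3 := hA.apply 2 3
  rw [cumulant_eq_sum, pf23, Finset.sum_insert (by decide), Finset.sum_singleton, Finset.prod_insert (by decide)]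
  simp only [Finset.prod_singleton]
  norm_num [Nat.factorial, pm0, pm1, pm2, pm3, pm01, pm02, pm03, pm12, pm13, pm23, pm012, pm013, pm023, pm123, pm0123, h10, h20, h30, h21, h31, h32, show (#({{2}, {3}} : Finset (Finset (Fin 4)))) = 2 from by decide]
  try ring

lemma cum012 {R : Type*} [CommRing R] (A : Matrix (Fin 4) (Fin 4) R) (hA : A.IsSymm) :
    cumulant (principalMinor A) {0,1,2} = 2 * (A 0 1 * A 0 2 * A 1 2) := by
  have h10 : A 1 0 = A 0 1 := hA.apply 0 1
  have h20 : A 2 0 = A 0 2 := hA.apply 0 2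
  have h30 : A 3 0 = A 0 3 := hA.apply 0 3
  have h21 : A 2 1 = A 1 2 := hA.apply 1 2
  have h31 : A 3 1 = A 1 3 := hA.apply 1 3
  have h32 : A 3 2 = A 2 3 := hA.apply 2 3
  rw [cumulant_eq_sum, pf012, Finset.sum_insert (by decide), Finset.sum_insert (by decide), Finset.sum_insert (by decide), Finset.sum_insert (by decide), Finset.sum_singleton, Finset.prod_insert (by decide), Finset.prod_insert (by decide), Finset.prod_insert (by decide), Finset.prod_insert (by decide), Finset.prod_insert (by decide)]
  simp only [Finset.prod_singleton]
  norm_num [Nat.factorial, pm0, pm1, pm2, pm3, pm01, pm02, pm03, pm12, pm13, pm23, pm012, pm013, pm023, pm123, pm0123, h10, h20, h30, h21, h31, h32, show (#({{0}, {1,2}} : Finset (Finset (Fin 4)))) = 2 from by decide, show (#({{0,1}, {2}} : Finset (Finset (Fin 4)))) = 2 from by decide, show (#({{0,2}, {1}} : Finset (Finset (Fin 4)))) = 2 from by decide, show (#({{0}, {1}, {2}} : Finset (Finset (Fin 4)))) = 3 from by decide]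
  try ring

lemma cum013 {R : Type*} [CommRing R] (A : Matrix (Fin 4) (Fin 4) R) (hA : A.IsSymm) :
    cumulant (principalMinor A) {0,1,3} = 2 * (A 0 1 * A 0 3 * A 1 3) := by
  have h10 : A 1 0 = A 0 1 := hA.apply 0 1
  have h20 : A 2 0 = A 0 2 := hA.apply 0 2
  have h30 : A 3 0 = A 0 3 := hA.apply 0 3
  have h21 : A 2 1 = A 1 2 := hA.apply 1 2
  have h31 : A 3 1 = A 1 3 := hA.apply 1 3
  have h32 : A 3 2 = A 2 3 := hA.apply 2 3
  rw [cumulant_eq_sum, pf013, Finset.sum_insert (by decide), Finset.sum_insert (by decide), Finset.sum_insert (by decide), Finset.sum_insert (by decide), Finset.sum_singleton, Finset.prod_insert (by decide), Finset.prod_insert (by decide), Finset.prod_insert (by decide), Finset.prod_insert (by decide), Finset.prod_insert (by decide)]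
  simp only [Finset.prod_singleton]
  norm_num [Nat.factorial, pm0, pm1, pm2, pm3, pm01, pm02, pm03, pm12, pm13, pm23, pm012, pm013, pm023, pm123, pm0123, h10, h20, h30, h21, h31, h32, show (#({{0}, {1,3}} : Finset (Finset (Fin 4)))) = 2 from by decide, show (#({{0,1}, {3}} : Finset (Finset (Fin 4)))) = 2 from by decide, show (#({{0,3}, {1}} : Finset (Finset (Fin 4)))) = 2 from by decide, show (#({{0}, {1}, {3}} : Finset (Finset (Fin 4)))) = 3 from by decide]
  try ring

lemma cum023 {R : Type*} [CommRing R] (A : Matrix (Fin 4) (Fin 4) R) (hA : A.IsSymm) :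
    cumulant (principalMinor A) {0,2,3} = 2 * (A 0 2 * A 0 3 * A 2 3) := by
  have h10 : A 1 0 = A 0 1 := hA.apply 0 1
  have h20 : A 2 0 = A 0 2 := hA.apply 0 2
  have h30 : A 3 0 = A 0 3 := hA.apply 0 3
  have h21 : A 2 1 = A 1 2 := hA.apply 1 2
  have h31 : A 3 1 = A 1 3 := hA.apply 1 3
  have h32 : A 3 2 = A 2 3 := hA.apply 2 3
  rw [cumulant_eq_sum, pf023, Finset.sum_insert (by decide), Finset.sum_insert (by decide), Finset.sum_insert (by decide), Finset.sum_insert (by decide), Finset.sum_singleton, Finset.prod_insert (by decide), Finset.prod_insert (by decide), Finset.prod_insert (by decide), Finset.prod_insert (by decide), Finset.prod_insert (by decide)]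
  simp only [Finset.prod_singleton]
  norm_num [Nat.factorial, pm0, pm1, pm2, pm3, pm01, pm02, pm03, pm12, pm13, pm23, pm012, pm013, pm023, pm123, pm0123, h10, h20, h30, h21, h31, h32, show (#({{0}, {2,3}} : Finset (Finset (Fin 4)))) = 2 from by decide, show (#({{0,2}, {3}} : Finset (Finset (Fin 4)))) = 2 from by decide, show (#({{0,3}, {2}} : Finset (Finset (Fin 4)))) = 2 from by decide, show (#({{0}, {2}, {3}} : Finset (Finset (Fin 4)))) = 3 from by decide]
  try ring

lemma cum123 {R : Type*} [CommRing R] (A : Matrix (Fin 4) (Fin 4) R) (hA : A.IsSymm) :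
    cumulant (principalMinor A) {1,2,3} = 2 * (A 1 2 * A 1 3 * A 2 3) := by
  have h10 : A 1 0 = A 0 1 := hA.apply 0 1
  have h20 : A 2 0 = A 0 2 := hA.apply 0 2
  have h30 : A 3 0 = A 0 3 := hA.apply 0 3
  have h21 : A 2 1 = A 1 2 := hA.apply 1 2
  have h31 : A 3 1 = A 1 3 := hA.apply 1 3
  have h32 : A 3 2 = A 2 3 := hA.apply 2 3
  rw [cumulant_eq_sum, pf123, Finset.sum_insert (by decide), Finset.sum_insert (by decide), Finset.sum_insert (by decide), Finset.sum_insert (by decide), Finset.sum_singleton, Finset.prod_insert (by decide), Finset.prod_insert (by decide), Finset.prod_insert (by decide), Finset.prod_insert (by decide), Finset.prod_insert (by decide)]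
  simp only [Finset.prod_singleton]
  norm_num [Nat.factorial, pm0, pm1, pm2, pm3, pm01, pm02, pm03, pm12, pm13, pm23, pm012, pm013, pm023, pm123, pm0123, h10, h20, h30, h21, h31, h32, show (#({{1}, {2,3}} : Finset (Finset (Fin 4)))) = 2 from by decide, show (#({{1,2}, {3}} : Finset (Finset (Fin 4)))) = 2 from by decide, show (#({{1,3}, {2}} : Finset (Finset (Fin 4)))) = 2 from by decide, show (#({{1}, {2}, {3}} : Finset (Finset (Fin 4)))) = 3 from by decide]
  try ring

lemma cumUniv {R : Type*} [CommRing R] (A : Matrix (Fin 4) (Fin 4) R) (hA : A.IsSymm) :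
    cumulant (principalMinor A) Finset.univ = -2 * (A 0 1 * A 0 2 * A 1 3 * A 2 3 + A 0 1 * A 0 3 * A 1 2 * A 2 3
              + A 0 2 * A 0 3 * A 1 2 * A 1 3) := by
  have h10 : A 1 0 = A 0 1 := hA.apply 0 1
  have h20 : A 2 0 = A 0 2 := hA.apply 0 2
  have h30 : A 3 0 = A 0 3 := hA.apply 0 3
  have h21 : A 2 1 = A 1 2 := hA.apply 1 2
  have h31 : A 3 1 = A 1 3 := hA.apply 1 3
  have h32 : A 3 2 = A 2 3 := hA.apply 2 3
  rw [cumulant_eq_sum, pfUniv, Finset.sum_insert (by decide), Finset.sum_insert (by decide), Finset.sum_insert (by decide), Finset.sum_insert (by decide), Finset.sum_insert (by decide), Finset.sum_insert (by decide), Finset.sum_insert (by decide), Finset.sum_insert (by decide), Finset.sum_insert (by decide), Finset.sum_insert (by decide), Finset.sum_insert (by decide), Finset.sum_insert (by decide), Finset.sum_insert (by decide), Finset.sum_insert (by decide), Finset.sum_singleton, Finset.prod_insert (by decide), Finset.prod_insert (by decide), Finset.prod_insert (by decide), Finset.prod_insert (by decide), Finset.prod_insert (by decide), Finset.prod_insert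 (by decide), Finset.prod_insert (by decide), Finset.prod_insert (by decide), Finset.prod_insert (by decide), Finset.prod_insert (by decide), Finset.prod_insert (by decide), Finset.prod_insert (by decide), Finset.prod_insert (by decide), Finset.prod_insert (by decide), Finset.prod_insert (by decide), Finset.prod_insert (by decide), Finset.prod_insert (by decide), Finset.prod_insert (by decide), Finset.prod_insert (by decide), Finset.prod_insert (by decide), Finset.prod_insert (by decide), Finset.prod_insert (by decide)]
  simp only [Finset.prod_singleton]
  norm_num [Nat.factorial, pm0, pm1, pm2, pm3, pm01, pm02, pm03, pm12, pm13, pm23, pm012, pm013, pm023, pm123, pm0123, h10, h20, h30, h21, h31, h32, show (#({{0}, {1,2,3}} : Finset (Finset (Fin 4)))) = 2 from by decide, show (#({{0,1}, {2,3}} : Finset (Finset (Fin 4)))) = 2 from by decide, show (#({{0,2,3}, {1}} : Finset (Finset (Fin 4)))) = 2 from by decide, show (#({{0}, {1}, {2,3}} : Finset (Finset (Fin 4)))) = 3 from by decide, show (#({{0,1,2}, {3}} : Finset (Finset (Fin 4)))) = 2 from by decide, show (#({{0,3}, {1,2}} : Finset (Finset (Fin 4)))) = 2 from by decide, show (#({{0},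 {1,2}, {3}} : Finset (Finset (Fin 4)))) = 3 from by decide, show (#({{0,2}, {1,3}} : Finset (Finset (Fin 4)))) = 2 from by decide, show (#({{0,1,3}, {2}} : Finset (Finset (Fin 4)))) = 2 from by decide, show (#({{0}, {1,3}, {2}} : Finset (Finset (Fin 4)))) = 3 from by decide, show (#({{0,1}, {2}, {3}} : Finset (Finset (Fin 4)))) = 3 from by decide, show (#({{0,2}, {1}, {3}} : Finset (Finset (Fin 4)))) = 3 from by decide, show (#({{0,3}, {1}, {2}} : Finset (Finset (Fin 4)))) = 3 from by decide, show (#({{0}, {1}, {2}, {3}} : Finset (Finset (Fin 4)))) = 4 from by decide]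
  try ring

/-- the formal cumulants of the table of principal minors of a
symmetric `4×4` matrix are given by cycle monomials:
`k_i = a_{ii}`, `k_{ij} = −a_{ij}²`, `k_{ijl} = 2 a_{ij} a_{il} a_{jl}`, and
`k_{1234} = −2(a_{12}a_{13}a_{24}a_{34} + a_{12}a_{14}a_{23}a_{34} +
a_{13}a_{14}a_{23}a_{24})`. -/
theorem principal_minor_cumulants {R : Type*} [CommRing R]
    (A : Matrix (Fin 4) (Fin 4) R) (hA : A.IsSymm) :
    (∀ i : Fin 4, cumulant (principalMinor A) {i} = A i i) ∧
    (∀ i j : Fin 4, i < j →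
      cumulant (principalMinor A) {i, j} = -(A i j) ^ 2) ∧
    (∀ i j l : Fin 4, i < j → j < l →
      cumulant (principalMinor A) {i, j, l} = 2 * (A i j * A i l * A j l)) ∧
    (cumulant (principalMinor A) univ =
      -2 * (A 0 1 * A 0 2 * A 1 3 * A 2 3 + A 0 1 * A 0 3 * A 1 2 * A 2 3
              + A 0 2 * A 0 3 * A 1 2 * A 1 3)) := by
  refine ⟨?_, ?_, ?_, ?_⟩
  · intro i
    have hi : i = 0 ∨ i = 1 ∨ i = 2 ∨ i = 3 := by omega
    rcases hi with rfl | rfl | rfl | rfl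
    · exact cum0 A
    · exact cum1 A
    · exact cum2 A
    · exact cum3 A
  · intro i j hij
    have hi : i = 0 ∨ i = 1 ∨ i = 2 ∨ i = 3 := by omega
    have hj : j = 0 ∨ j = 1 ∨ j = 2 ∨ j = 3 := by omega
    rcases hi with rfl | rfl | rfl | rfl <;> rcases hj with rfl | rfl | rfl | rfl <;>
      first
        | exact absurd hij (by decide)
        | exact cum01 A hA
        | exact cum02 A hA
        | exact cum03 A hA
        | exact cum12 A hA
        | exact cum13 A hA
        | exact cum23 A hA
  · intro i j l hij hjl
    have hi : i = 0 ∨ i = 1 ∨ i = 2 ∨ i = 3 := by omega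
    have hj : j = 0 ∨ j = 1 ∨ j = 2 ∨ j = 3 := by omega
    have hl : l = 0 ∨ l = 1 ∨ l = 2 ∨ l = 3 := by omega
    rcases hi with rfl | rfl | rfl | rfl <;> rcases hj with rfl | rfl | rfl | rfl <;>
      rcases hl with rfl | rfl | rfl | rfl <;>
      first
        | exact absurd hij (by decide)
        | exact absurd hjl (by decide)
        | exact cum012 A hA
        | exact cum013 A hA
        | exact cum023 A hA
        | exact cum123 A hA
  · exact cumUniv A hA
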